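/- arXiv:1506.03433 — 2 statements merged into one kernel-verified Lean document; each statement's English description precedes it below -/
import Mathlib

section
/- Let κ be an infinite cardinal with cf(κ) > ω, let L be a set, and let ⟨A_σ : σ ∈ 2^{<ω}⟩ and ⟨B_σ : σ ∈ 2^{<ω}⟩ be nice sequences of subsets of L such that A_σ ∼_κ B_σ for every σ ∈ 2^{<ω}. Then there exists S ⊆ L with |S| < κ such that A_x \ S = B_x \ S for every x ∈ 2^ω; moreover |X(Ā) △ X(B̄)| < κ. -/
open Cardinal Set

/-- `A ∼_κ B`: the symmetric difference of `A` and `B` has cardinality `< κ`. -/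
def Sim {L : Type} (κ : Cardinal.{0}) (A B : Set L) : Prop :=
  #(↥(symmDiff A B)) < κ

/-- The restriction `x ↾ n` of `x ∈ 2^ω` to a finite binary sequence of length `n`. -/
def restrictSeq (x : ℕ → Bool) (n : ℕ) : List Bool :=
  List.ofFn fun i : Fin n => x i

/-- A nice sequence of subsets of `L`, indexed by finite binary sequences: `A (σ⌢0)` and
`A (σ⌢1)` partition `A σ`. -/
def NiceSeq {L : Type} (A : List Bool → Set L) : Prop :=
  ∀ σ : List Bool, Disjoint (A (σ ++ [false])) (A (σ ++ [true])) ∧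
    A (σ ++ [false]) ∪ A (σ ++ [true]) = A σ

/-- `A_x = ⋂ n, A (x ↾ n)` for `x ∈ 2^ω`. -/
def branchSet {L : Type} (A : List Bool → Set L) (x : ℕ → Bool) : Set L :=
  ⋂ n : ℕ, A (restrictSeq x n)

/-- `X(Ā) = {x ∈ 2^ω | A_x ≠ ∅}`. -/
def XSet {L : Type} (A : List Bool → Set L) : Set (ℕ → Bool) :=
  {x : ℕ → Bool | branchSet A x ≠ ∅}

lemma restrictSeq_succ (x : ℕ → Bool) (n : ℕ) :
    restrictSeq x (n + 1) = restrictSeq x n ++ [x n] := by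
  unfold restrictSeq
  rw [List.ofFn_succ']
  simp [List.concat_eq_append]

/-- Branch sets of a nice sequence along distinct branches are disjoint. -/
lemma branchSet_disjoint {L : Type} {A : List Bool → Set L} (hA : NiceSeq A)
    {x y : ℕ → Bool} (hxy : x ≠ y) {ℓ : L} (hx : ℓ ∈ branchSet A x)
    (hy : ℓ ∈ branchSet A y) : False := by
  have hex : ∃ n, x n ≠ y n := by
    by_contra h
    push_neg at h
    exact hxy (funext h)
  classical
  set n := Nat.find hex with hndef
  have hn : x n ≠ y n := Nat.find_spec hex
  have hmin : ∀ m < n, x m = y m := fun m hm => not_ne_iff.mp (Nat.find_min hex hm)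
  have hres : restrictSeq x n = restrictSeq y n := by
    unfold restrictSeq
    congr 1
    funext i
    simpa using hmin i i.2
  have hxA : ℓ ∈ A (restrictSeq x n ++ [x n]) := by
    have := Set.mem_iInter.mp hx (n + 1)
    rwa [restrictSeq_succ] at this
  have hyA : ℓ ∈ A (restrictSeq x n ++ [y n]) := by
    have := Set.mem_iInter.mp hy (n + 1)
    rwa [restrictSeq_succ, ← hres] at this
  have hd := (hA (restrictSeq x n)).1
  cases hxn : x n <;> cases hyn : y n
  · exact hn (hxn.trans hyn.symm)
  · exact Set.disjoint_left.mp hd (by rwa [hxn] at hxA) (by rwa [hyn] at hyA)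
  · exact Set.disjoint_left.mp hd (by rwa [hyn] at hyA) (by rwa [hxn] at hxA)
  · exact hn (hxn.trans hyn.symm)

/-- Two nice sequences of representatives of the same subalgebra of `P(L)/I_κ` have the
same branch sets off of a small set, and almost the same branch spectrum `X(Ā)`. -/
theorem stmt10 {L : Type} (κ : Cardinal.{0}) (hκ : ℵ₀ ≤ κ)
    (hcf : ℵ₀ < (κ.ord).cof)
    (A B : List Bool → Set L) (hA : NiceSeq A) (hB : NiceSeq B)
    (hAB : ∀ σ : List Bool, Sim κ (A σ) (B σ)) :
    (∃ S : Set L, #(↥S) < κ ∧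
      ∀ x : ℕ → Bool, branchSet A x \ S = branchSet B x \ S) ∧
    #(↥(symmDiff (XSet A) (XSet B))) < κ := by
  classical
  set S : Set L := ⋃ σ : List Bool, symmDiff (A σ) (B σ) with hS
  have hℵκ : ℵ₀ < κ := lt_of_lt_of_le hcf (Ordinal.cof_ord_le κ)
  have hScard : #(↥S) < κ := by
    refine lt_of_le_of_lt (mk_iUnion_le _) ?_
    apply Cardinal.mul_lt_of_lt hκ
    · exact lt_of_le_of_lt (Cardinal.mk_le_aleph0) hℵκ
    · exact Ordinal.iSup_lt (lt_of_le_of_lt Cardinal.mk_le_aleph0 hcf) hAB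
  have hbranch : ∀ x : ℕ → Bool, branchSet A x \ S = branchSet B x \ S := by
    intro x
    have key : ∀ ℓ ∉ S, (ℓ ∈ branchSet A x ↔ ℓ ∈ branchSet B x) := by
      intro ℓ hℓ
      have hsym : ∀ σ, ℓ ∉ symmDiff (A σ) (B σ) := fun σ h =>
        hℓ (Set.mem_iUnion.mpr ⟨σ, h⟩)
      have hiff : ∀ σ, ℓ ∈ A σ ↔ ℓ ∈ B σ := by
        intro σ
        have := hsym σ
        rw [Set.mem_symmDiff] at this
        push_neg at this
        exact ⟨this.1, this.2⟩
      constructor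
      · intro h
        exact Set.mem_iInter.mpr fun n => (hiff _).mp (Set.mem_iInter.mp h n)
      · intro h
        exact Set.mem_iInter.mpr fun n => (hiff _).mpr (Set.mem_iInter.mp h n)
    ext ℓ
    constructor
    · rintro ⟨h1, h2⟩; exact ⟨(key ℓ h2).mp h1, h2⟩
    · rintro ⟨h1, h2⟩; exact ⟨(key ℓ h2).mpr h1, h2⟩
  refine ⟨⟨S, hScard, hbranch⟩, ?_⟩
  -- Second part: inject the symmetric difference into S × Bool.
  have hsub : ∀ x ∈ symmDiff (XSet A) (XSet B),
      (x ∈ XSet A → ∃ ℓ ∈ branchSet A x, ℓ ∈ S) ∧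
      (x ∉ XSet A → ∃ ℓ ∈ branchSet B x, ℓ ∈ S) := by
    intro x hx
    rw [Set.mem_symmDiff] at hx
    constructor
    · intro hxa
      rcases hx with ⟨_, hxb⟩ | ⟨_, hxa'⟩
      · -- branchSet B x = ∅
        have hBempty : branchSet B x = ∅ := not_ne_iff.mp hxb
        obtain ⟨ℓ, hℓ⟩ := Set.nonempty_iff_ne_empty.mpr hxa
        refine ⟨ℓ, hℓ, ?_⟩
        by_contra hns
        have : ℓ ∈ branchSet B x \ S := (hbranch x) ▸ (⟨hℓ, hns⟩ : ℓ ∈ branchSet A x \ S)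
        rw [hBempty] at this
        exact this.1
      · exact absurd hxa hxa'
    · intro hxa
      rcases hx with ⟨hxa', _⟩ | ⟨hxb, _⟩
      · exact absurd hxa' hxa
      · have hAempty : branchSet A x = ∅ := not_ne_iff.mp hxa
        obtain ⟨ℓ, hℓ⟩ := Set.nonempty_iff_ne_empty.mpr hxb
        refine ⟨ℓ, hℓ, ?_⟩
        by_contra hns
        have : ℓ ∈ branchSet A x \ S := (hbranch x).symm ▸ (⟨hℓ, hns⟩ : ℓ ∈ branchSet B x \ S)
        rw [hAempty] at this
        exact this.1
  set f : ↥(symmDiff (XSet A) (XSet B)) → ↥S × Bool := fun x =>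
    if h : (x : ℕ → Bool) ∈ XSet A then
      (⟨((hsub x x.2).1 h).choose, ((hsub x x.2).1 h).choose_spec.2⟩, true)
    else
      (⟨((hsub x x.2).2 h).choose, ((hsub x x.2).2 h).choose_spec.2⟩, false)
    with hf
  have hinj : Function.Injective f := by
    rintro ⟨x, hx⟩ ⟨y, hy⟩ hxy
    by_cases hxa : x ∈ XSet A <;> by_cases hya : y ∈ XSet A <;>
      simp only [hf, hxa, hya, dif_pos, dif_neg, not_false_iff, Prod.mk.injEq,
        Subtype.mk.injEq] at hxy
    · have h1 := ((hsub x hx).1 hxa).choose_spec.1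
      have h2 := ((hsub y hy).1 hya).choose_spec.1
      rw [hxy.1] at h1
      ext1
      by_contra hne
      exact branchSet_disjoint hA hne h1 h2
    · exact absurd hxy.2 (by simp)
    · exact absurd hxy.2 (by simp)
    · have h1 := ((hsub x hx).2 hxa).choose_spec.1
      have h2 := ((hsub y hy).2 hya).choose_spec.1
      rw [hxy.1] at h1
      ext1
      by_contra hne
      exact branchSet_disjoint hB hne h1 h2
  calc #(↥(symmDiff (XSet A) (XSet B))) ≤ #(↥S × Bool) := Cardinal.mk_le_of_injective hinj
    _ = #(↥S) * 2 := by simp [Cardinal.mk_prod]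
    _ < κ := Cardinal.mul_lt_of_lt hκ hScard (lt_of_lt_of_le (by exact_mod_cast Cardinal.nat_lt_aleph0 2 : (2:Cardinal) < ℵ₀) hκ)
end

section
/- Let κ be an infinite cardinal with cf(κ) > ω, let L be a set, and let ⟨A_σ : σ ∈ 2^{<ω}⟩ and ⟨B_σ : σ ∈ 2^{<ω}⟩ be nice sequences of subsets of L. Then the following are equivalent: (1) there exist E ⊆ A_∅ and F ⊆ B_∅ with |A_∅ \ E| < κ and |B_∅ \ F| < κ, and a bijection g : E → F such that g''(A_σ ∩ E) ∼_κ B_σ for every σ ∈ 2^{<ω}; (2) |X(Ā) △ X(B̄)| < κ, and there exists S ⊆ L with |S| < κ such that |A_x \ S| = |B_x \ S| for every x ∈ 2^ω. -/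
open Cardinal Set

namespace Stmt11Aux

variable {L : Type} {A : List Bool → Set L}

lemma restrictSeq_zero (x : ℕ → Bool) : restrictSeq x 0 = [] := rfl

lemma restrictSeq_succ (x : ℕ → Bool) (n : ℕ) :
    restrictSeq x (n + 1) = restrictSeq x n ++ [x n] := by
  rw [restrictSeq, List.ofFn_succ']
  simp [restrictSeq, List.concat_eq_append]

lemma restrictSeq_length (x : ℕ → Bool) (n : ℕ) : (restrictSeq x n).length = n := by
  simp [restrictSeq]

lemma append_subset (hA : NiceSeq A) (σ : List Bool) (b : Bool) : A (σ ++ [b]) ⊆ A σ := by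
  cases b
  · rw [← (hA σ).2]; exact subset_union_left
  · rw [← (hA σ).2]; exact subset_union_right

lemma mem_restrict_of_le (hA : NiceSeq A) {x : ℕ → Bool} {a : L} {m n : ℕ} (h : m ≤ n)
    (ha : a ∈ A (restrictSeq x n)) : a ∈ A (restrictSeq x m) := by
  induction n with
  | zero => rw [Nat.le_zero.mp h]; exact ha
  | succ n ih =>
    rcases Nat.eq_or_lt_of_le h with h' | h'
    · rw [h']; exact ha
    · exact ih (Nat.lt_succ_iff.mp h')
        (append_subset hA _ _ (by rw [← restrictSeq_succ]; exact ha))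

lemma exists_restrict_eq (σ : List Bool) : ∃ x : ℕ → Bool, restrictSeq x σ.length = σ := by
  refine ⟨fun i => σ.getD i false, ?_⟩
  apply List.ext_getElem (restrictSeq_length _ _)
  intro i h1 h2
  simp [restrictSeq, List.getD_eq_getElem]
noncomputable def bitOf (A : List Bool → Set L) (a : L) (ρ : List Bool) : Bool :=
  @decide (a ∈ A (ρ ++ [true])) (Classical.propDecidable _)

lemma bitOf_eq_true_iff (a : L) (ρ : List Bool) :
    bitOf A a ρ = true ↔ a ∈ A (ρ ++ [true]) := by
  simp [bitOf]

noncomputable def pref (A : List Bool → Set L) (a : L) : ℕ → List Bool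
  | 0 => []
  | n + 1 => pref A a n ++ [bitOf A a (pref A a n)]

noncomputable def branchOf (A : List Bool → Set L) (a : L) : ℕ → Bool :=
  fun n => bitOf A a (pref A a n)

lemma restrict_branchOf (A : List Bool → Set L) (a : L) (n : ℕ) :
    restrictSeq (branchOf A a) n = pref A a n := by
  induction n with
  | zero => rfl
  | succ n ih => rw [restrictSeq_succ, ih]; rfl

lemma mem_pref (hA : NiceSeq A) {a : L} (ha : a ∈ A []) (n : ℕ) : a ∈ A (pref A a n) := by
  induction n with
  | zero => exact ha
  | succ n ih =>
    by_cases h : a ∈ A (pref A a n ++ [true])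
    · have hb : bitOf A a (pref A a n) = true := (bitOf_eq_true_iff a _).mpr h
      show a ∈ A (pref A a n ++ [bitOf A a (pref A a n)])
      rw [hb]; exact h
    · have hb : bitOf A a (pref A a n) = false := by
        rw [← Bool.not_eq_true, bitOf_eq_true_iff]; exact h
      show a ∈ A (pref A a n ++ [bitOf A a (pref A a n)])
      rw [hb]
      rw [← (hA (pref A a n)).2] at ih
      rcases ih with h' | h'
      · exact h'
      · exact absurd h' h

lemma mem_branchSet_self (hA : NiceSeq A) {a : L} (ha : a ∈ A []) :
    a ∈ branchSet A (branchOf A a) := by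
  refine mem_iInter.mpr fun n => ?_
  rw [restrict_branchOf]
  exact mem_pref hA ha n

lemma restrict_eq (hA : NiceSeq A) {a : L} {x y : ℕ → Bool} (n : ℕ)
    (hx : a ∈ A (restrictSeq x n)) (hy : a ∈ A (restrictSeq y n)) :
    restrictSeq x n = restrictSeq y n := by
  induction n with
  | zero => rfl
  | succ n ih =>
    rw [restrictSeq_succ] at hx hy ⊢
    have hx' := append_subset hA _ _ hx
    have hy' := append_subset hA _ _ hy
    have hr := ih hx' hy'
    rw [hr] at hx ⊢
    have hxy : x n = y n := by
      by_contra hne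
      cases hbx : x n <;> cases hby : y n
      · exact hne (hbx.trans hby.symm)
      · rw [hbx] at hx; rw [hby] at hy
        exact (hA (restrictSeq y n)).1.ne_of_mem hx hy rfl
      · rw [hbx] at hx; rw [hby] at hy
        exact (hA (restrictSeq y n)).1.ne_of_mem hy hx rfl
      · exact hne (hbx.trans hby.symm)
    rw [hxy, ← restrictSeq_succ]

lemma branch_eq (hA : NiceSeq A) {a : L} {x y : ℕ → Bool}
    (hx : a ∈ branchSet A x) (hy : a ∈ branchSet A y) : x = y := by
  funext n
  have h1 := restrict_eq hA (n + 1) (mem_iInter.mp hx (n + 1)) (mem_iInter.mp hy (n + 1))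
  have h0 := restrict_eq hA n (mem_iInter.mp hx n) (mem_iInter.mp hy n)
  rw [restrictSeq_succ, restrictSeq_succ, h0] at h1
  simpa using h1

lemma branchSet_subset (x : ℕ → Bool) (n : ℕ) : branchSet A x ⊆ A (restrictSeq x n) :=
  iInter_subset _ n

lemma branchSet_subset_empty (x : ℕ → Bool) : branchSet A x ⊆ A [] :=
  branchSet_subset x 0

lemma mem_empty_of_mem (hA : NiceSeq A) {σ : List Bool} {a : L} (ha : a ∈ A σ) :
    a ∈ A [] := by
  obtain ⟨x, hx⟩ := exists_restrict_eq σ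
  rw [← hx] at ha
  exact mem_restrict_of_le hA (Nat.zero_le _) ha

lemma restrict_branchOf_eq (hA : NiceSeq A) {σ : List Bool} {a : L} (ha : a ∈ A σ) :
    restrictSeq (branchOf A a) σ.length = σ := by
  obtain ⟨x, hx⟩ := exists_restrict_eq σ
  have h1 : a ∈ A (restrictSeq (branchOf A a) σ.length) := by
    rw [restrict_branchOf]; exact mem_pref hA (mem_empty_of_mem hA ha) _
  have h2 : a ∈ A (restrictSeq x σ.length) := by rw [hx]; exact ha
  rw [restrict_eq hA _ h1 h2, hx]

lemma branchSet_subset_of_restrict {x : ℕ → Bool} {σ : List Bool}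
    (h : restrictSeq x σ.length = σ) : branchSet A x ⊆ A σ :=
  h ▸ branchSet_subset x σ.length

lemma mk_iUnion_lt {κ : Cardinal.{0}} (hκ : ℵ₀ ≤ κ) (hcf : ℵ₀ < κ.ord.cof)
    {ι : Type} [Countable ι] {f : ι → Set L} (hf : ∀ i, #(f i) < κ) :
    #(⋃ i, f i) < κ := by
  have hι : #ι ≤ ℵ₀ := mk_le_aleph0
  refine (mk_iUnion_le f).trans_lt (mul_lt_of_lt hκ ?_ ?_)
  · exact hι.trans_lt (hcf.trans_le (Ordinal.cof_ord_le κ))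
  · exact Ordinal.iSup_lt (hι.trans_lt hcf) hf

lemma mk_subset_lt {κ : Cardinal.{0}} {s t : Set L} (h : s ⊆ t) (ht : #t < κ) : #s < κ :=
  (mk_le_mk_of_subset h).trans_lt ht

lemma diff_eq_of_symmDiff_subset {P Q T : Set L} (h : symmDiff P Q ⊆ T) :
    P \ T = Q \ T := by
  ext a
  simp only [mem_diff]
  constructor
  · rintro ⟨hp, hT⟩
    refine ⟨?_, hT⟩
    by_contra hq
    exact hT (h (Set.mem_symmDiff.mpr (Or.inl ⟨hp, hq⟩)))
  · rintro ⟨hq, hT⟩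
    refine ⟨?_, hT⟩
    by_contra hp
    exact hT (h (Set.mem_symmDiff.mpr (Or.inr ⟨hq, hp⟩)))

lemma mpr_dir {κ : Cardinal.{0}} {A B : List Bool → Set L}
    (hA : NiceSeq A) (hB : NiceSeq B) {S : Set L} (hS : #S < κ)
    (hcard : ∀ x : ℕ → Bool, #(↥(branchSet A x \ S)) = #(↥(branchSet B x \ S))) :
    ∃ (E F : Set L) (g : L → L), E ⊆ A [] ∧ F ⊆ B [] ∧
      #(↥(A [] \ E)) < κ ∧ #(↥(B [] \ F)) < κ ∧ Set.BijOn g E F ∧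
      ∀ σ : List Bool, Sim κ (g '' (A σ ∩ E)) (B σ) := by
  classical
  have e : ∀ x : ℕ → Bool, ↥(branchSet A x \ S) ≃ ↥(branchSet B x \ S) :=
    fun x => (Cardinal.eq.mp (hcard x)).some
  set g : L → L := fun a =>
    if h : a ∈ A [] \ S then
      (e (branchOf A a) ⟨a, mem_branchSet_self hA h.1, h.2⟩ : L)
    else a with hgdef
  have g_apply : ∀ (x : ℕ → Bool) (a : L) (hx : a ∈ branchSet A x) (ha : a ∈ A [] \ S),
      g a = (e x ⟨a, hx, ha.2⟩ : L) := by
    intro x a hx ha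
    have hbx : branchOf A a = x := branch_eq hA (mem_branchSet_self hA ha.1) hx
    subst hbx
    simp only [hgdef, dif_pos ha]
  have g_mem : ∀ a, a ∈ A [] \ S → g a ∈ branchSet B (branchOf A a) \ S := by
    intro a ha
    rw [g_apply (branchOf A a) a (mem_branchSet_self hA ha.1) ha]
    exact (e (branchOf A a) _).2
  have g_surj : ∀ (x : ℕ → Bool) (b : L), b ∈ branchSet B x \ S →
      ∃ a, a ∈ branchSet A x \ S ∧ g a = b := by
    intro x b hb
    set s := (e x).symm ⟨b, hb⟩ with hsdef
    refine ⟨(s : L), s.2, ?_⟩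
    have h1 : g (s : L) = (e x ⟨(s : L), s.2.1, s.2.2⟩ : L) :=
      g_apply x s s.2.1 ⟨branchSet_subset_empty x s.2.1, s.2.2⟩
    rw [h1]
    have h2 : (⟨(s : L), s.2.1, s.2.2⟩ : ↥(branchSet A x \ S)) = s := Subtype.ext rfl
    rw [h2, hsdef, Equiv.apply_symm_apply]
  have himg : ∀ σ : List Bool, g '' (A σ ∩ (A [] \ S)) = B σ \ S := by
    intro σ
    ext b
    constructor
    · rintro ⟨a, ⟨haσ, haE⟩, rfl⟩
      have hm := g_mem a haE
      have hrs := restrict_branchOf_eq hA haσ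
      exact ⟨branchSet_subset_of_restrict hrs hm.1, hm.2⟩
    · intro hb
      have hb' : b ∈ branchSet B (branchOf B b) \ S :=
        ⟨mem_branchSet_self hB (mem_empty_of_mem hB hb.1), hb.2⟩
      obtain ⟨a, ha, hgab⟩ := g_surj _ b hb'
      have hrs := restrict_branchOf_eq hB hb.1
      exact ⟨a, ⟨branchSet_subset_of_restrict hrs ha.1,
        branchSet_subset_empty _ ha.1, ha.2⟩, hgab⟩
  refine ⟨A [] \ S, B [] \ S, g, diff_subset, diff_subset, ?_, ?_, ⟨?_, ?_, ?_⟩, ?_⟩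
  · refine mk_subset_lt ?_ hS
    rintro a ⟨h1, h2⟩
    by_contra hs
    exact h2 ⟨h1, hs⟩
  · refine mk_subset_lt ?_ hS
    rintro a ⟨h1, h2⟩
    by_contra hs
    exact h2 ⟨h1, hs⟩
  · -- MapsTo
    intro a ha
    have hm := g_mem a ha
    exact ⟨branchSet_subset_empty _ hm.1, hm.2⟩
  · -- InjOn
    intro a1 ha1 a2 ha2 h
    have h1 := g_mem a1 ha1
    have h2 := g_mem a2 ha2
    rw [h] at h1
    have hxx : branchOf A a1 = branchOf A a2 := branch_eq hB h1.1 h2.1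
    have hx2 : a2 ∈ branchSet A (branchOf A a1) := hxx ▸ mem_branchSet_self hA ha2.1
    have e1 : g a1 = (e (branchOf A a1) ⟨a1, mem_branchSet_self hA ha1.1, ha1.2⟩ : L) :=
      g_apply (branchOf A a1) a1 (mem_branchSet_self hA ha1.1) ha1
    have e2 : g a2 = (e (branchOf A a1) ⟨a2, hx2, ha2.2⟩ : L) := g_apply (branchOf A a1) a2 hx2 ha2
    have hcoe : ((e (branchOf A a1) ⟨a1, mem_branchSet_self hA ha1.1, ha1.2⟩ : _) : L)
        = ((e (branchOf A a1) ⟨a2, hx2, ha2.2⟩ : _) : L) := by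
      rw [← e1, ← e2, h]
    have := (e (branchOf A a1)).injective (Subtype.coe_injective hcoe)
    exact congrArg Subtype.val this
  · -- SurjOn
    intro b hb
    have hb' : b ∈ branchSet B (branchOf B b) \ S :=
      ⟨mem_branchSet_self hB hb.1, hb.2⟩
    obtain ⟨a, ha, hgab⟩ := g_surj _ b hb'
    exact ⟨a, ⟨branchSet_subset_empty _ ha.1, ha.2⟩, hgab⟩
  · -- Sim
    intro σ
    show #(↥(symmDiff (g '' (A σ ∩ (A [] \ S))) (B σ))) < κ
    rw [himg σ]
    refine mk_subset_lt ?_ hS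
    intro a ha
    rcases Set.mem_symmDiff.mp ha with ⟨h1, h2⟩ | ⟨h1, h2⟩
    · exact absurd h1.1 h2
    · by_contra hs
      exact h2 ⟨h1, hs⟩

lemma mp_dir {κ : Cardinal.{0}} (hκ : ℵ₀ ≤ κ) (hcf : ℵ₀ < κ.ord.cof)
    {A B : List Bool → Set L} (hA : NiceSeq A) (hB : NiceSeq B)
    {E F : Set L} {g : L → L}
    (hAE : #(↥(A [] \ E)) < κ) (hBF : #(↥(B [] \ F)) < κ)
    (hbij : Set.BijOn g E F)
    (hsim : ∀ σ : List Bool, Sim κ (g '' (A σ ∩ E)) (B σ)) :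
    #(↥(symmDiff (XSet A) (XSet B))) < κ ∧
      ∃ S : Set L, #(↥S) < κ ∧
        ∀ x : ℕ → Bool, #(↥(branchSet A x \ S)) = #(↥(branchSet B x \ S)) := by
  classical
  set S0 : Set L := (A [] \ E) ∪ (B [] \ F) ∪
    ⋃ σ : List Bool, symmDiff (g '' (A σ ∩ E)) (B σ) with hS0def
  have hS0 : #S0 < κ :=
    (mk_union_le _ _).trans_lt (add_lt_of_lt hκ
      ((mk_union_le _ _).trans_lt (add_lt_of_lt hκ hAE hBF))
      (mk_iUnion_lt hκ hcf fun σ => hsim σ))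
  set Sn : ℕ → Set L :=
    fun n => Nat.rec S0 (fun _ s => s ∪ (E ∩ g ⁻¹' s) ∪ g '' (E ∩ s)) n with hSndef
  have hSnsucc : ∀ n, Sn (n + 1) = Sn n ∪ (E ∩ g ⁻¹' Sn n) ∪ g '' (E ∩ Sn n) :=
    fun n => rfl
  have hSnlt : ∀ n, #(Sn n) < κ := by
    intro n
    induction n with
    | zero => exact hS0
    | succ n ih =>
      rw [hSnsucc]
      have h1 : #(↥(E ∩ g ⁻¹' Sn n)) ≤ #(Sn n) := by
        have hsub : g '' (E ∩ g ⁻¹' Sn n) ⊆ Sn n := by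
          rintro _ ⟨a, ⟨_, ha⟩, rfl⟩; exact ha
        calc #(↥(E ∩ g ⁻¹' Sn n)) = #(↥(g '' (E ∩ g ⁻¹' Sn n))) :=
              (mk_image_eq_of_injOn g _ (hbij.injOn.mono inter_subset_left)).symm
          _ ≤ #(Sn n) := mk_le_mk_of_subset hsub
      have h2 : #(↥(g '' (E ∩ Sn n))) ≤ #(Sn n) :=
        mk_image_le.trans (mk_le_mk_of_subset inter_subset_right)
      exact (mk_union_le _ _).trans_lt (add_lt_of_lt hκ
        ((mk_union_le _ _).trans_lt (add_lt_of_lt hκ ih (h1.trans_lt ih)))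
        (h2.trans_lt ih))
  set S : Set L := ⋃ n, Sn n with hSdef
  have hS : #S < κ := mk_iUnion_lt hκ hcf hSnlt
  have hS0S : S0 ⊆ S := subset_iUnion Sn 0
  have hclosed1 : ∀ a ∈ E, a ∈ S → g a ∈ S := by
    intro a haE haS
    obtain ⟨n, han⟩ := mem_iUnion.mp haS
    exact subset_iUnion Sn (n + 1)
      (by rw [hSnsucc]; exact Set.mem_union_right _ ⟨a, ⟨haE, han⟩, rfl⟩)
  have hclosed2 : ∀ a ∈ E, g a ∈ S → a ∈ S := by
    intro a haE haS
    obtain ⟨n, han⟩ := mem_iUnion.mp haS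
    exact subset_iUnion Sn (n + 1)
      (by rw [hSnsucc]; exact Set.mem_union_left _ (Set.mem_union_right _ ⟨haE, han⟩))
  have hlevel : ∀ σ : List Bool, g '' (A σ ∩ E) \ S0 = B σ \ S0 := by
    intro σ
    apply diff_eq_of_symmDiff_subset
    exact (subset_iUnion (fun σ => symmDiff (g '' (A σ ∩ E)) (B σ)) σ).trans
      Set.subset_union_right
  have hAsubE : ∀ x : ℕ → Bool, branchSet A x \ S ⊆ E := by
    rintro x a ⟨hax, haS⟩
    by_contra haE
    exact haS (hS0S (Set.mem_union_left _
      (Set.mem_union_left _ ⟨branchSet_subset_empty x hax, haE⟩)))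
  have hbranch : ∀ x : ℕ → Bool, g '' (branchSet A x \ S) = branchSet B x \ S := by
    intro x
    ext b
    constructor
    · rintro ⟨a, ⟨hax, haS⟩, rfl⟩
      have haE : a ∈ E := hAsubE x ⟨hax, haS⟩
      have hgS : g a ∉ S := fun h => haS (hclosed2 a haE h)
      refine ⟨mem_iInter.mpr fun n => ?_, hgS⟩
      have h1 : g a ∈ g '' (A (restrictSeq x n) ∩ E) :=
        ⟨a, ⟨mem_iInter.mp hax n, haE⟩, rfl⟩
      have h2 : g a ∉ S0 := fun h => hgS (hS0S h)
      have h3 : g a ∈ B (restrictSeq x n) \ S0 := by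
        rw [← hlevel]; exact ⟨h1, h2⟩
      exact h3.1
    · rintro ⟨hbx, hbS⟩
      have hbS0 : b ∉ S0 := fun h => hbS (hS0S h)
      have hex : ∀ n, ∃ a, (a ∈ A (restrictSeq x n) ∩ E) ∧ g a = b := by
        intro n
        have h3 : b ∈ g '' (A (restrictSeq x n) ∩ E) \ S0 := by
          rw [hlevel]; exact ⟨mem_iInter.mp hbx n, hbS0⟩
        obtain ⟨a, ha, hab⟩ := h3.1
        exact ⟨a, ha, hab⟩
      obtain ⟨a0, ha0, hab0⟩ := hex 0
      have key : ∀ n, a0 ∈ A (restrictSeq x n) := by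
        intro n
        obtain ⟨a, ha, hab⟩ := hex n
        have heq : a = a0 := hbij.injOn ha.2 ha0.2 (hab.trans hab0.symm)
        rw [← heq]; exact ha.1
      have ha0S : a0 ∉ S := fun h => hbS (hab0 ▸ hclosed1 a0 ha0.2 h)
      exact ⟨a0, ⟨mem_iInter.mpr key, ha0S⟩, hab0⟩
  have hcard : ∀ x : ℕ → Bool, #(↥(branchSet A x \ S)) = #(↥(branchSet B x \ S)) := by
    intro x
    rw [← hbranch x]
    exact (mk_image_eq_of_injOn g _ (hbij.injOn.mono (hAsubE x))).symm
  refine ⟨?_, S, hS, hcard⟩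
  have spec : ∀ x : ↥(symmDiff (XSet A) (XSet B)), ∃ p : ↥S ⊕ ↥S,
      (∀ a : ↥S, p = Sum.inl a → (a : L) ∈ branchSet A (x : ℕ → Bool)) ∧
      (∀ b : ↥S, p = Sum.inr b → (b : L) ∈ branchSet B (x : ℕ → Bool)) := by
    rintro ⟨x, hx⟩
    rcases Set.mem_symmDiff.mp hx with ⟨hxA, hxB⟩ | ⟨hxB, hxA⟩
    · have hBx : branchSet B x = ∅ := not_ne_iff.mp hxB
      have hABx : branchSet A x \ S = ∅ := by
        have h0 : #(↥(branchSet B x \ S)) = 0 := by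
          rw [Cardinal.mk_eq_zero_iff, Set.isEmpty_coe_sort, hBx]
          exact empty_diff S
        have h1 := (hcard x).trans h0
        rwa [Cardinal.mk_eq_zero_iff, Set.isEmpty_coe_sort] at h1
      obtain ⟨a, ha⟩ := nonempty_iff_ne_empty.mpr hxA
      have haS : a ∈ S := by
        by_contra h
        exact nonempty_iff_ne_empty.mp (⟨a, ha, h⟩ : (branchSet A x \ S).Nonempty) hABx
      refine ⟨Sum.inl ⟨a, haS⟩, fun a' h => ?_, fun b' h => by simp at h⟩
      rw [← Sum.inl.inj h]
      exact ha
    · have hAx : branchSet A x = ∅ := not_ne_iff.mp hxA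
      have hBBx : branchSet B x \ S = ∅ := by
        have h0 : #(↥(branchSet A x \ S)) = 0 := by
          rw [Cardinal.mk_eq_zero_iff, Set.isEmpty_coe_sort, hAx]
          exact empty_diff S
        have h1 := (hcard x).symm.trans h0
        rwa [Cardinal.mk_eq_zero_iff, Set.isEmpty_coe_sort] at h1
      obtain ⟨b, hb⟩ := nonempty_iff_ne_empty.mpr hxB
      have hbS : b ∈ S := by
        by_contra h
        exact nonempty_iff_ne_empty.mp (⟨b, hb, h⟩ : (branchSet B x \ S).Nonempty) hBBx
      refine ⟨Sum.inr ⟨b, hbS⟩, fun a' h => by simp at h, fun b' h => ?_⟩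
      rw [← Sum.inr.inj h]
      exact hb
  choose f hf1 hf2 using spec
  have hfinj : Function.Injective f := by
    intro x y hxy
    cases hp : f x with
    | inl a =>
      have h1 := hf1 x a hp
      have h2 := hf1 y a (hxy.symm.trans hp)
      exact Subtype.ext (branch_eq hA h1 h2)
    | inr b =>
      have h1 := hf2 x b hp
      have h2 := hf2 y b (hxy.symm.trans hp)
      exact Subtype.ext (branch_eq hB h1 h2)
  have hle : #(↥(symmDiff (XSet A) (XSet B))) ≤ #(↥S ⊕ ↥S) :=
    mk_le_of_injective hfinj
  have heq : #(↥S ⊕ ↥S) = #S + #S := by simp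
  rw [heq] at hle
  exact hle.trans_lt (add_lt_of_lt hκ hS hS)

end Stmt11Aux

/-- Characterization of when an isomorphism between countable atomless subalgebras of
`P(L)/I_κ`, given by nice sequences of representatives, extends to a trivial isomorphism. -/
theorem stmt11 {L : Type} (κ : Cardinal.{0}) (hκ : ℵ₀ ≤ κ)
    (hcf : ℵ₀ < (κ.ord).cof)
    (A B : List Bool → Set L) (hA : NiceSeq A) (hB : NiceSeq B) :
    (∃ (E F : Set L) (g : L → L),
        E ⊆ A [] ∧ F ⊆ B [] ∧
        #(↥(A [] \ E)) < κ ∧ #(↥(B [] \ F)) < κ ∧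
        Set.BijOn g E F ∧
        ∀ σ : List Bool, Sim κ (g '' (A σ ∩ E)) (B σ)) ↔
    (#(↥(symmDiff (XSet A) (XSet B))) < κ ∧
      ∃ S : Set L, #(↥S) < κ ∧
        ∀ x : ℕ → Bool, #(↥(branchSet A x \ S)) = #(↥(branchSet B x \ S))) := by
  constructor
  · rintro ⟨E, F, g, hEA, hFB, hAE, hBF, hbij, hsim⟩
    exact Stmt11Aux.mp_dir hκ hcf hA hB hAE hBF hbij hsim
  · rintro ⟨-, S, hS, hcard⟩
    exact Stmt11Aux.mpr_dir hA hB hS hcard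
end
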